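/- arXiv:2308.08971 — 4 statements merged into one kernel-verified Lean document; each statement's English description precedes it below -/
import Mathlib

section
/- Let α ∈ (0,1), σ = 1 − α/2, and let η > 0. Define ϱ(η, σ, α) = 1 + (1 + 1/η)^{−1}·[((1 + 1/(ση))^{2−α} − 1) − (1/η)·((1 + 1/(ση))^{1−α} + 1)]. Then for all η ∈ [3/4, 62], ϱ(η, σ, α) ≥ 1. -/
/-!
With `u = 1 / (σ η)` we have `1 / η = σ u`, and since `σ = 1 - α/2` the bracket defining `ϱ`
equals `(1 + u)^(1-α) (1 + (α/2) u) - (1 + σ u)`. Its nonnegativity is the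
Padé-type bound `(1 + u)^β ≥ (1 + (1+β)u/2) / (1 + (1-β)u/2)` with `β = 1 - α`. Substituting
`x = u / (u + 2)` turns this into `artanh (β x) ≤ β artanh x`, which holds term by term in the
power series `artanh x = ∑ x^(2k+1) / (2k+1)` because `β^(2k+1) ≤ β`.
-/

open Real

theorem log_one_add_mul_sub_log_one_sub_mul_le {b x : ℝ} (hb₀ : 0 ≤ b) (hb₁ : b ≤ 1)
    (hx₀ : 0 ≤ x) (hx₁ : x < 1) :
    log (1 + b * x) - log (1 - b * x) ≤ b * (log (1 + x) - log (1 - x)) := by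
  have hbx : |b * x| < 1 := by
    rw [abs_of_nonneg (mul_nonneg hb₀ hx₀)]
    nlinarith
  have hx : |x| < 1 := by rwa [abs_of_nonneg hx₀]
  refine hasSum_le (fun k => ?_) (hasSum_log_sub_log_of_abs_lt_one hbx)
    ((hasSum_log_sub_log_of_abs_lt_one hx).mul_left b)
  have hpow : b ^ (2 * k + 1) ≤ b := pow_le_of_le_one hb₀ hb₁ (Nat.succ_ne_zero _)
  have hcoef : 0 ≤ (2 : ℝ) * (1 / (2 * k + 1)) * x ^ (2 * k + 1) := by positivity
  calc (2 : ℝ) * (1 / (2 * k + 1)) * (b * x) ^ (2 * k + 1)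
      = b ^ (2 * k + 1) * (2 * (1 / (2 * k + 1)) * x ^ (2 * k + 1)) := by ring
    _ ≤ b * (2 * (1 / (2 * k + 1)) * x ^ (2 * k + 1)) := by gcongr

theorem one_add_mul_le_one_add_rpow_mul {β u : ℝ} (hβ₀ : 0 ≤ β) (hβ₁ : β ≤ 1) (hu : 0 ≤ u) :
    1 + (1 + β) / 2 * u ≤ (1 + u) ^ β * (1 + (1 - β) / 2 * u) := by
  have hu2 : 0 < u + 2 := by linarith
  have hQ : 0 < 1 + (1 - β) / 2 * u := by nlinarith
  have hx : u / (u + 2) < 1 := by rw [div_lt_one hu2]; linarith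
  have hartanh := log_one_add_mul_sub_log_one_sub_mul_le hβ₀ hβ₁ (by positivity) hx
  have hβx : 1 - β * (u / (u + 2)) = 2 / (u + 2) * (1 + (1 - β) / 2 * u) := by
    field_simp; ring
  have hx' : 1 - u / (u + 2) = 2 / (u + 2) := by field_simp; ring
  rw [← log_div (by positivity) (by rw [hβx]; positivity), ← log_div (by positivity)
    (by rw [hx']; positivity)] at hartanh
  have hratio : (1 + β * (u / (u + 2))) / (1 - β * (u / (u + 2)))
      = (1 + (1 + β) / 2 * u) / (1 + (1 - β) / 2 * u) := by
    rw [hβx]; field_simp; ring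
  have hsum : (1 + u / (u + 2)) / (1 - u / (u + 2)) = 1 + u := by
    rw [hx']; field_simp; ring
  rw [hratio, hsum] at hartanh
  rw [← div_le_iff₀ hQ, le_rpow_iff_log_le (by positivity) (by linarith)]
  exact hartanh

theorem varrho_lower_bound
    (alpha : ℝ) (halpha : alpha ∈ Set.Ioo (0 : ℝ) 1)
    (sigma : ℝ) (hsigma : sigma = 1 - alpha / 2) :
    ∀ eta ∈ Set.Icc (3 / 4 : ℝ) 62,
      1 + (1 + 1 / eta)⁻¹ *
        (((1 + 1 / (sigma * eta)) ^ (2 - alpha) - 1)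
          - (1 / eta) * ((1 + 1 / (sigma * eta)) ^ (1 - alpha) + 1)) ≥ 1 := by
  obtain ⟨hα₀, hα₁⟩ := halpha
  intro eta heta
  have hη : 0 < eta := by linarith [heta.1]
  have hσ : 0 < sigma := by linarith
  set u := 1 / (sigma * eta) with hu_def
  have hu : 0 < u := by positivity
  have hinv : 1 / eta = sigma * u := by rw [hu_def]; field_simp
  have hsplit : (1 + u) ^ (2 - alpha) = (1 + u) ^ (1 - alpha) * (1 + u) := by
    rw [show 2 - alpha = (1 - alpha) + 1 by ring, rpow_add_one (by linarith)]
  have hpade := one_add_mul_le_one_add_rpow_mul (β := 1 - alpha) (by linarith) (by linarith) hu.le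
  have hbracket : 0 ≤ ((1 + u) ^ (2 - alpha) - 1) - 1 / eta * ((1 + u) ^ (1 - alpha) + 1) := by
    rw [hsplit, hinv, hsigma]
    linarith
  have hweight : 0 ≤ (1 + 1 / eta)⁻¹ := by positivity
  linarith [mul_nonneg hweight hbracket]
end

section
/- Let μ = βσ + w with β ≥ 0, σ ∈ (1/2, 1], w > 0, and let λ₁, λ₂ > 0, a₁, a₂ ≥ 2/3, b₁, b₂ ≥ 0. Then the amplification factor G = [(a₁a₂/μ)·w − ((1−σ)/μ)(λ₁a₂b₁ + λ₂a₁b₂ + βa₁a₂) + (σ²/μ²)λ₁λ₂b₁b₂] / [(a₁ + (σλ₁/μ)b₁)(a₂ + (σλ₂/μ)b₂)] satisfies |G| ≤ 1. -/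
/-!
Multiplying out the denominator gives `a₁a₂ + (σ/μ)(λ₁a₂b₁ + λ₂a₁b₂) + (σ²/μ²)λ₁λ₂b₁b₂`.
By the triangle inequality the numerator is at most
`(a₁a₂/μ)w + (|1 - σ|/μ)(λ₁a₂b₁ + λ₂a₁b₂ + βa₁a₂) + (σ²/μ²)λ₁λ₂b₁b₂` in absolute value,
and since `|1 - σ| ≤ σ` for `σ ≥ 1/2` this is at most the denominator, because
`(a₁a₂/μ)(w + βσ) = a₁a₂`.
-/

theorem abs_div_le_one_of_abs_le {n d : ℝ} (h : |n| ≤ d) : |n / d| ≤ 1 := by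
  rw [abs_div]
  exact div_le_one_of_le₀ (h.trans (le_abs_self d)) (abs_nonneg d)

theorem abs_one_sub_le_self {σ : ℝ} (hσ : 1 / 2 ≤ σ) : |1 - σ| ≤ σ :=
  abs_le.mpr ⟨by linarith, by linarith⟩

theorem abs_add_add_le (x y z : ℝ) : |x + y + z| ≤ |x| + |y| + |z| :=
  (abs_add_le _ _).trans (add_le_add_left (abs_add_le _ _) _)

theorem abs_amplification_numerator_le {A B C β σ w μ : ℝ}
    (hA : 0 ≤ A) (hB : 0 ≤ B) (hC : 0 ≤ C) (hβ : 0 ≤ β) (hσ : 1 / 2 ≤ σ) (hw : 0 < w)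
    (hμ : μ = β * σ + w) :
    |A / μ * w - (1 - σ) / μ * (B + β * A) + σ ^ 2 / μ ^ 2 * C|
      ≤ A + σ / μ * B + σ ^ 2 / μ ^ 2 * C := by
  have hμ_pos : 0 < μ := by rw [hμ]; nlinarith
  calc |A / μ * w - (1 - σ) / μ * (B + β * A) + σ ^ 2 / μ ^ 2 * C|
      ≤ |A / μ * w| + |(1 - σ) / μ * (B + β * A)| + |σ ^ 2 / μ ^ 2 * C| := by
        simpa only [sub_eq_add_neg, abs_neg] using
          abs_add_add_le (A / μ * w) (-((1 - σ) / μ * (B + β * A))) (σ ^ 2 / μ ^ 2 * C)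
    _ = A / μ * w + |1 - σ| / μ * (B + β * A) + σ ^ 2 / μ ^ 2 * C := by
        rw [abs_of_nonneg (by positivity : 0 ≤ A / μ * w),
          abs_of_nonneg (by positivity : 0 ≤ σ ^ 2 / μ ^ 2 * C), abs_mul, abs_div,
          abs_of_pos hμ_pos, abs_of_nonneg (by positivity : 0 ≤ B + β * A)]
    _ ≤ A / μ * w + σ / μ * (B + β * A) + σ ^ 2 / μ ^ 2 * C := by
        gcongr
        exact abs_one_sub_le_self hσ
    _ = A + σ / μ * B + σ ^ 2 / μ ^ 2 * C := by
        have hA_eq : A / μ * (β * σ + w) = A := by rw [← hμ]; field_simp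
        linear_combination hA_eq

theorem amplification_factor_bound
    (beta sigma w lam1 lam2 a1 a2 b1 b2 mu G : ℝ)
    (hbeta : 0 ≤ beta) (hsigma : sigma ∈ Set.Ioc (1 / 2 : ℝ) 1) (hw : 0 < w)
    (hlam1 : 0 < lam1) (hlam2 : 0 < lam2)
    (ha1 : 2 / 3 ≤ a1) (ha2 : 2 / 3 ≤ a2) (hb1 : 0 ≤ b1) (hb2 : 0 ≤ b2)
    (hmu : mu = beta * sigma + w)
    (hG : G = ((a1 * a2 / mu) * w
        - ((1 - sigma) / mu) * (lam1 * a2 * b1 + lam2 * a1 * b2 + beta * a1 * a2)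
        + (sigma ^ 2 / mu ^ 2) * lam1 * lam2 * b1 * b2)
      / ((a1 + (sigma * lam1 / mu) * b1) * (a2 + (sigma * lam2 / mu) * b2))) :
    |G| ≤ 1 := by
  have ha1' : 0 ≤ a1 := by linarith
  have ha2' : 0 ≤ a2 := by linarith
  have hnum := abs_amplification_numerator_le (A := a1 * a2) (B := lam1 * a2 * b1 + lam2 * a1 * b2)
    (C := lam1 * lam2 * b1 * b2) (by positivity) (by positivity) (by positivity) hbeta
    hsigma.1.le hw hmu
  rw [hG]
  apply abs_div_le_one_of_abs_le
  convert hnum using 1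
  · congr 1
    ring
  · ring
end

section
/- Let σ ∈ (1/2, 1], β ≥ 0, λ₁, λ₂ > 0, a₁, a₂ ≥ 2/3, b₁, b₂ ≥ 0, and let w₀ < w₁ < ⋯ < w_i be positive reals (monotone increasing L2-1_σ coefficients). Set μ = βσ + w_i. Suppose complex numbers ω⁰, ω¹, …, ω^i satisfy |ω^k| ≤ |ω⁰| for all 0 ≤ k ≤ i, and ω^{i+1} = [ (a₁a₂/μ)(Σ_{k=1}^{i}(w_k − w_{k−1})ω^k + w₀ω⁰) − ((1−σ)/μ)(λ₁a₂b₁ + λ₂a₁b₂ + βa₁a₂)ω^i + (σ²/μ²)λ₁λ₂b₁b₂ω^i ] / [ (a₁ + (σλ₁/μ)b₁)(a₂ + (σλ₂/μ)b₂) ]. Then |ω^{i+1}| ≤ |ω⁰|. -/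
/-!
With every `‖ω k‖ ≤ ‖ω 0‖`, the triangle inequality and the telescoping identity
`∑ (w k - w (k - 1)) + w 0 = w i` bound the numerator by
`(a₁a₂ w_i / μ + (1 - σ) K / μ + σ² λ₁λ₂b₁b₂ / μ²) ‖ω 0‖`, where `K = λ₁a₂b₁ + λ₂a₁b₂ + βa₁a₂`.
Since `w_i = μ - βσ`, the denominator exceeds this coefficient by exactly `(2σ - 1) K / μ ≥ 0`.
-/

open Finset

theorem Finset.sum_Icc_one_sub_pred (w : ℕ → ℝ) (n : ℕ) :
    ∑ k ∈ Icc 1 n, (w k - w (k - 1)) = w n - w 0 := by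
  induction n with
  | zero => simp
  | succ n ih =>
    rw [sum_Icc_succ_top (by omega), ih, Nat.add_sub_cancel]
    ring

theorem norm_sum_Icc_one_sub_pred_smul_add_le {E : Type*} [SeminormedAddCommGroup E]
    [NormedSpace ℝ E] {w : ℕ → ℝ} {z : ℕ → E} {n : ℕ} {M : ℝ}
    (hw0 : 0 ≤ w 0) (hw : ∀ k, k < n → w k ≤ w (k + 1)) (hz : ∀ k, k ≤ n → ‖z k‖ ≤ M) :
    ‖∑ k ∈ Icc 1 n, (w k - w (k - 1)) • z k + w 0 • z 0‖ ≤ w n * M := by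
  have hterm : ∀ k ∈ Icc 1 n, ‖(w k - w (k - 1)) • z k‖ ≤ (w k - w (k - 1)) * M := by
    intro k hk
    obtain ⟨hk1, hkn⟩ := mem_Icc.mp hk
    have hstep : w (k - 1) ≤ w k := by
      simpa [Nat.sub_add_cancel hk1] using hw (k - 1) (by omega)
    rw [norm_smul_of_nonneg (sub_nonneg.mpr hstep)]
    exact mul_le_mul_of_nonneg_left (hz k hkn) (sub_nonneg.mpr hstep)
  calc ‖∑ k ∈ Icc 1 n, (w k - w (k - 1)) • z k + w 0 • z 0‖
      ≤ ∑ k ∈ Icc 1 n, (w k - w (k - 1)) * M + w 0 * M := by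
        refine (norm_add_le _ _).trans (add_le_add ((norm_sum_le _ _).trans (sum_le_sum hterm)) ?_)
        rw [norm_smul_of_nonneg hw0]
        exact mul_le_mul_of_nonneg_left (hz 0 (Nat.zero_le n)) hw0
    _ = w n * M := by rw [← sum_mul, sum_Icc_one_sub_pred]; ring

theorem norm_smul_sub_smul_add_smul_le {E : Type*} [SeminormedAddCommGroup E] [NormedSpace ℝ E]
    {x y : E} {a b c A B : ℝ} (ha : 0 ≤ a) (hb : 0 ≤ b) (hc : 0 ≤ c)
    (hx : ‖x‖ ≤ A) (hy : ‖y‖ ≤ B) :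
    ‖a • x - b • y + c • y‖ ≤ a * A + b * B + c * B :=
  calc ‖a • x - b • y + c • y‖ ≤ ‖a • x‖ + ‖b • y‖ + ‖c • y‖ :=
        (norm_add_le _ _).trans (add_le_add_left (norm_sub_le _ _) _)
    _ = a * ‖x‖ + b * ‖y‖ + c * ‖y‖ := by
        rw [norm_smul_of_nonneg ha, norm_smul_of_nonneg hb, norm_smul_of_nonneg hc]
    _ ≤ a * A + b * B + c * B := by gcongr

theorem denominator_sub_numerator_coeff {β σ l₁ l₂ a₁ a₂ b₁ b₂ w μ : ℝ} (hμ : μ = β * σ + w)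
    (hμ0 : μ ≠ 0) :
    (a₁ + σ * l₁ / μ * b₁) * (a₂ + σ * l₂ / μ * b₂)
        - (a₁ * a₂ / μ * w + (1 - σ) / μ * (l₁ * a₂ * b₁ + l₂ * a₁ * b₂ + β * a₁ * a₂)
          + σ ^ 2 / μ ^ 2 * (l₁ * l₂ * b₁ * b₂))
      = (2 * σ - 1) / μ * (l₁ * a₂ * b₁ + l₂ * a₁ * b₂ + β * a₁ * a₂) := by
  obtain rfl : w = μ - β * σ := by linarith
  field_simp
  ring

theorem numerator_coeff_le_denominator {β σ l₁ l₂ a₁ a₂ b₁ b₂ w μ : ℝ} (hμ : μ = β * σ + w)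
    (hμ0 : 0 < μ) (hσ : 1 / 2 ≤ σ) (hβ : 0 ≤ β) (hl₁ : 0 ≤ l₁) (hl₂ : 0 ≤ l₂)
    (ha₁ : 0 ≤ a₁) (ha₂ : 0 ≤ a₂) (hb₁ : 0 ≤ b₁) (hb₂ : 0 ≤ b₂) :
    a₁ * a₂ / μ * w + (1 - σ) / μ * (l₁ * a₂ * b₁ + l₂ * a₁ * b₂ + β * a₁ * a₂)
        + σ ^ 2 / μ ^ 2 * (l₁ * l₂ * b₁ * b₂)
      ≤ (a₁ + σ * l₁ / μ * b₁) * (a₂ + σ * l₂ / μ * b₂) := by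
  rw [← sub_nonneg, denominator_sub_numerator_coeff hμ hμ0.ne']
  exact mul_nonneg (div_nonneg (by linarith) hμ0.le) (by positivity)

theorem fourier_stability_inductive_step
    (beta sigma lam1 lam2 a1 a2 b1 b2 : ℝ)
    (hbeta : 0 ≤ beta) (hsigma : sigma ∈ Set.Ioc (1 / 2 : ℝ) 1)
    (hlam1 : 0 < lam1) (hlam2 : 0 < lam2)
    (ha1 : 2 / 3 ≤ a1) (ha2 : 2 / 3 ≤ a2) (hb1 : 0 ≤ b1) (hb2 : 0 ≤ b2)
    (i : ℕ) (w : ℕ → ℝ) (hw0 : 0 < w 0)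
    (hwmono : ∀ k, k < i → w k < w (k + 1))
    (mu : ℝ) (hmu : mu = beta * sigma + w i)
    (omega : ℕ → ℂ)
    (hind : ∀ k, k ≤ i → ‖omega k‖ ≤ ‖omega 0‖)
    (hrec : omega (i + 1) =
      (((a1 * a2 / mu : ℝ) : ℂ) *
          ((∑ k ∈ Finset.Icc 1 i, (((w k - w (k - 1) : ℝ)) : ℂ) * omega k)
            + ((w 0 : ℝ) : ℂ) * omega 0)
        - (((1 - sigma) / mu * (lam1 * a2 * b1 + lam2 * a1 * b2 + beta * a1 * a2) : ℝ) : ℂ)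
            * omega i
        + ((sigma ^ 2 / mu ^ 2 * (lam1 * lam2 * b1 * b2) : ℝ) : ℂ) * omega i)
      / (((a1 + sigma * lam1 / mu * b1 : ℝ) : ℂ)
          * ((a2 + sigma * lam2 / mu * b2 : ℝ) : ℂ))) :
    ‖omega (i + 1)‖ ≤ ‖omega 0‖ := by
  obtain ⟨hsigma_gt, hsigma_le⟩ := hsigma
  have hwi : w 0 ≤ w i :=
    monotoneOn_of_le_succ Set.ordConnected_Iic
      (fun k _ _ hk ↦ by simpa using (hwmono k (Order.succ_le_iff.mp hk)).le)
      (Set.mem_Iic.mpr i.zero_le) Set.self_mem_Iic i.zero_le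
  have hmu0 : 0 < mu := by rw [hmu]; nlinarith
  have hd₁ : 0 < a1 + sigma * lam1 / mu * b1 := by positivity
  have hd₂ : 0 < a2 + sigma * lam2 / mu * b2 := by positivity
  have hnum := norm_smul_sub_smul_add_smul_le
    (div_nonneg (by positivity) hmu0.le : 0 ≤ a1 * a2 / mu)
    (mul_nonneg (div_nonneg (by linarith) hmu0.le) (by positivity) :
      0 ≤ (1 - sigma) / mu * (lam1 * a2 * b1 + lam2 * a1 * b2 + beta * a1 * a2))
    (by positivity : 0 ≤ sigma ^ 2 / mu ^ 2 * (lam1 * lam2 * b1 * b2))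
    (norm_sum_Icc_one_sub_pred_smul_add_le hw0.le (fun k hk ↦ (hwmono k hk).le) hind)
    (hind i le_rfl)
  simp only [Complex.real_smul] at hnum
  rw [hrec, norm_div, norm_mul, Complex.norm_real, Complex.norm_real, Real.norm_of_nonneg hd₁.le,
    Real.norm_of_nonneg hd₂.le, div_le_iff₀ (by positivity)]
  calc _ ≤ _ := hnum
    _ = (a1 * a2 / mu * w i
          + (1 - sigma) / mu * (lam1 * a2 * b1 + lam2 * a1 * b2 + beta * a1 * a2)
          + sigma ^ 2 / mu ^ 2 * (lam1 * lam2 * b1 * b2)) * ‖omega 0‖ := by ring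
    _ ≤ _ := by
      rw [mul_comm]
      gcongr
      exact numerator_coeff_le_denominator hmu hmu0 hsigma_gt.le hbeta hlam1.le hlam2.le
        (by linarith) (by linarith) hb1 hb2
end

section
/- Let α ∈ (0,1), θ ≥ 1, and suppose a function satisfies |g'''(t)| ≤ κ(1 + t^{α−3}) for t ∈ (0,T]. On the graded mesh t_i = T(i/N)^θ, for 1 ≤ i ≤ N−1 the quantity Q^{i+σ} := t_{i+σ}^α · τ_{i+1}^{3−α} · sup_{s∈(t_i,t_{i+1})}|g'''(s)| satisfies Q^{i+σ} ≤ C·N^{−min{3−α, θα}} for a constant C independent of N and i. -/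
/-!
Since `t_i ≤ T`, the weight `1 + t_i^(α-3)` is at most `(T^(3-α) + 1) / t_i^(3-α)`, so the term
is bounded by a constant times `t_{i+1}^α (τ_{i+1} / t_i)^(3-α)`. Bernoulli's inequality gives
`τ_{i+1} ≤ θ t_{i+1} / (i+1)`, and `t_{i+1} ≤ 2^θ t_i` for `i ≥ 1`, so `τ_{i+1} / t_i ≤ 2^θ θ / (i+1)`;
with `t_{i+1}^α = T^α ((i+1)/N)^(θα)` the term is `O((i+1)^(θα-(3-α)) N^(-θα))`. For `1 ≤ i+1 ≤ N`
this is at most `N^(-min(3-α, θα))`, according to the sign of `θα - (3-α)`.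
-/

open Real Set

theorem Real.rpow_sub_rpow_le_mul_sub_mul_rpow_sub_one {x y p : ℝ} (hx : 0 ≤ x) (hxy : x ≤ y)
    (hp : 1 ≤ p) : y ^ p - x ^ p ≤ p * (y - x) * y ^ (p - 1) := by
  rcases hxy.eq_or_lt with rfl | hxy
  · simp
  have hy : 0 < y := hx.trans_lt hxy
  have hbern := one_add_mul_self_le_rpow_one_add
    (show -1 ≤ x / y - 1 by linarith [div_nonneg hx hy.le]) hp
  rw [add_sub_cancel, div_rpow hx hy.le, le_div_iff₀ (rpow_pos_of_pos hy p)] at hbern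
  have hyp : y ^ p = y ^ (p - 1) * y := by rw [← rpow_add_one hy.ne', sub_add_cancel]
  have : (1 + p * (x / y - 1)) * y ^ p = y ^ p - p * (y - x) * y ^ (p - 1) := by
    rw [hyp]; field_simp; ring
  linarith

theorem Real.rpow_sub_mul_rpow_neg_le_rpow_neg_min {k n : ℝ} (a b : ℝ) (hk : 1 ≤ k)
    (hkn : k ≤ n) : k ^ (a - b) * n ^ (-a) ≤ n ^ (-min b a) := by
  have hn : 0 < n := by linarith
  rcases le_total a b with hab | hba
  · calc k ^ (a - b) * n ^ (-a) ≤ 1 * n ^ (-a) := by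
          gcongr
          exact rpow_le_one_of_one_le_of_nonpos hk (by linarith)
      _ = n ^ (-min b a) := by rw [one_mul, min_eq_right hab]
  · calc k ^ (a - b) * n ^ (-a) ≤ n ^ (a - b) * n ^ (-a) := by
          gcongr
      _ = n ^ (-min b a) := by rw [← rpow_add hn, min_eq_left hba]; ring_nf

theorem Real.one_add_rpow_neg_le_div {u T p : ℝ} (hu : 0 < u) (huT : u ≤ T) (hp : 0 ≤ p) :
    1 + u ^ (-p) ≤ (T ^ p + 1) / u ^ p := by
  have hup : 0 < u ^ p := rpow_pos_of_pos hu p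
  rw [rpow_neg hu.le, le_div_iff₀ hup, add_mul, inv_mul_cancel₀ hup.ne', one_mul]
  gcongr

theorem iSup_Ioo_abs_le_div_rpow {f : ℝ → ℝ} {T κ p u v : ℝ} (hκ : 0 ≤ κ) (hp : 0 ≤ p)
    (hu : 0 < u) (huv : u ≤ v) (hvT : v ≤ T) (hf : ∀ s ∈ Ioc 0 T, |f s| ≤ κ * (1 + s ^ (-p))) :
    ⨆ s ∈ Ioo u v, |f s| ≤ κ * ((T ^ p + 1) / u ^ p) := by
  have hT : 0 < T := hu.trans_le (huv.trans hvT)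
  have hbound : 0 ≤ κ * ((T ^ p + 1) / u ^ p) := by positivity
  refine Real.iSup_le (fun s => Real.iSup_le (fun hs => ?_) hbound) hbound
  calc |f s| ≤ κ * (1 + s ^ (-p)) := hf s ⟨hu.trans hs.1, hs.2.le.trans hvT⟩
    _ ≤ κ * (1 + u ^ (-p)) := by
      gcongr κ * (1 + ?_)
      exact rpow_le_rpow_of_nonpos hu hs.1.le (neg_nonpos.2 hp)
    _ ≤ κ * ((T ^ p + 1) / u ^ p) := by
      gcongr
      exact one_add_rpow_neg_le_div hu (huv.trans hvT) hp

noncomputable def gradedMesh (T θ : ℝ) (N j : ℕ) : ℝ := T * ((j : ℝ) / N) ^ θ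

section gradedMesh

variable {T θ : ℝ} {N : ℕ}

theorem gradedMesh_eq (j : ℕ) : gradedMesh T θ N j = T / (N : ℝ) ^ θ * (j : ℝ) ^ θ := by
  rw [gradedMesh, div_rpow (Nat.cast_nonneg _) (Nat.cast_nonneg _)]
  ring

theorem gradedMesh_pos (hT : 0 < T) (hN : 0 < N) {j : ℕ} (hj : 0 < j) :
    0 < gradedMesh T θ N j :=
  mul_pos hT (rpow_pos_of_pos (div_pos (Nat.cast_pos.2 hj) (Nat.cast_pos.2 hN)) θ)

theorem gradedMesh_le (hT : 0 ≤ T) (hθ : 0 ≤ θ) {j : ℕ} (hj : j ≤ N) :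
    gradedMesh T θ N j ≤ T :=
  mul_le_of_le_one_right hT <| rpow_le_one (by positivity)
    (div_le_one_of_le₀ (Nat.cast_le.2 hj) (Nat.cast_nonneg _)) hθ

theorem gradedMesh_monotone (hT : 0 ≤ T) (hθ : 0 ≤ θ) : Monotone (gradedMesh T θ N) := by
  intro i j hij
  simp only [gradedMesh_eq]
  gcongr

theorem gradedMesh_rpow (hT : 0 ≤ T) (α : ℝ) (j : ℕ) :
    gradedMesh T θ N j ^ α = T ^ α * ((j : ℝ) ^ (θ * α) * (N : ℝ) ^ (-(θ * α))) := by
  rw [gradedMesh, mul_rpow hT (by positivity), ← rpow_mul (by positivity),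
    div_rpow (Nat.cast_nonneg _) (Nat.cast_nonneg _), rpow_neg (Nat.cast_nonneg _), div_eq_mul_inv]

theorem gradedMesh_succ_sub_le (hT : 0 ≤ T) (hθ : 1 ≤ θ) (j : ℕ) :
    gradedMesh T θ N (j + 1) - gradedMesh T θ N j ≤ θ / (j + 1) * gradedMesh T θ N (j + 1) := by
  have hj : (0 : ℝ) < j + 1 := by positivity
  have hstep := rpow_sub_rpow_le_mul_sub_mul_rpow_sub_one (Nat.cast_nonneg j)
    (le_add_of_nonneg_right zero_le_one) hθ
  rw [add_sub_cancel_left, mul_one, rpow_sub_one hj.ne'] at hstep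
  simp only [gradedMesh_eq, Nat.cast_add, Nat.cast_one]
  calc T / (N : ℝ) ^ θ * ((j + 1 : ℝ) ^ θ) - T / (N : ℝ) ^ θ * (j : ℝ) ^ θ
      = T / (N : ℝ) ^ θ * ((j + 1 : ℝ) ^ θ - (j : ℝ) ^ θ) := by ring
    _ ≤ T / (N : ℝ) ^ θ * (θ * ((j + 1 : ℝ) ^ θ / (j + 1))) := by gcongr
    _ = θ / (j + 1) * (T / (N : ℝ) ^ θ * (j + 1 : ℝ) ^ θ) := by ring

theorem gradedMesh_succ_le_two_rpow_mul (hT : 0 ≤ T) (hθ : 0 ≤ θ) {j : ℕ} (hj : 1 ≤ j) :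
    gradedMesh T θ N (j + 1) ≤ 2 ^ θ * gradedMesh T θ N j := by
  have hj' : (j + 1 : ℝ) ≤ 2 * j := by
    have : (1 : ℝ) ≤ j := by exact_mod_cast hj
    linarith
  simp only [gradedMesh_eq, Nat.cast_add, Nat.cast_one]
  calc T / (N : ℝ) ^ θ * (j + 1 : ℝ) ^ θ ≤ T / (N : ℝ) ^ θ * (2 * j : ℝ) ^ θ := by gcongr
    _ = 2 ^ θ * (T / (N : ℝ) ^ θ * (j : ℝ) ^ θ) := by
      rw [mul_rpow zero_le_two (Nat.cast_nonneg j)]; ring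

theorem gradedMesh_rpow_mul_step_ratio_le (hT : 0 < T) (hθ : 1 ≤ θ) {j : ℕ} (hj : 1 ≤ j)
    (hjN : j + 1 ≤ N) (α : ℝ) {p : ℝ} (hp : 0 ≤ p) :
    gradedMesh T θ N (j + 1) ^ α
        * ((gradedMesh T θ N (j + 1) - gradedMesh T θ N j) / gradedMesh T θ N j) ^ p
      ≤ T ^ α * (2 ^ θ * θ) ^ p * (N : ℝ) ^ (-min p (θ * α)) := by
  have hθ0 : 0 ≤ θ := zero_le_one.trans hθ
  have hj0 : (0 : ℝ) < j + 1 := by positivity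
  have hu := gradedMesh_pos (θ := θ) (N := N) hT (by omega) hj
  have hτ : 0 ≤ gradedMesh T θ N (j + 1) - gradedMesh T θ N j :=
    sub_nonneg.2 (gradedMesh_monotone hT.le hθ0 j.le_succ)
  have hratio : (gradedMesh T θ N (j + 1) - gradedMesh T θ N j) / gradedMesh T θ N j
      ≤ 2 ^ θ * θ / (j + 1) := by
    rw [div_le_iff₀ hu]
    calc gradedMesh T θ N (j + 1) - gradedMesh T θ N j
        ≤ θ / (j + 1) * gradedMesh T θ N (j + 1) := gradedMesh_succ_sub_le hT.le hθ j
      _ ≤ θ / (j + 1) * (2 ^ θ * gradedMesh T θ N j) := by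
        gcongr; exact gradedMesh_succ_le_two_rpow_mul hT.le hθ0 hj
      _ = 2 ^ θ * θ / (j + 1) * gradedMesh T θ N j := by ring
  calc gradedMesh T θ N (j + 1) ^ α
        * ((gradedMesh T θ N (j + 1) - gradedMesh T θ N j) / gradedMesh T θ N j) ^ p
      ≤ gradedMesh T θ N (j + 1) ^ α * (2 ^ θ * θ / (j + 1)) ^ p := by
        gcongr
        exact rpow_nonneg (hu.le.trans (gradedMesh_monotone hT.le hθ0 j.le_succ)) α
    _ = T ^ α * (2 ^ θ * θ) ^ p * ((j + 1 : ℝ) ^ (θ * α - p) * (N : ℝ) ^ (-(θ * α))) := by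
      rw [gradedMesh_rpow hT.le, div_rpow (by positivity) hj0.le, rpow_sub hj0]
      push_cast
      ring
    _ ≤ T ^ α * (2 ^ θ * θ) ^ p * (N : ℝ) ^ (-min p (θ * α)) := by
      gcongr
      exact rpow_sub_mul_rpow_neg_le_rpow_neg_min _ _ (le_add_of_nonneg_left (Nat.cast_nonneg j))
        (by exact_mod_cast hjN)

end gradedMesh

theorem graded_mesh_truncation_term_bound
    (alpha theta sigma T kappa : ℝ)
    (halpha : alpha ∈ Set.Ioo (0 : ℝ) 1)
    (htheta : 1 ≤ theta)
    (hsigma : sigma ∈ Set.Ioc (1 / 2 : ℝ) 1)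
    (hT : 0 < T) (hkappa : 0 ≤ kappa)
    (g : ℝ → ℝ)
    (hg : ∀ t ∈ Set.Ioc (0 : ℝ) T,
      |iteratedDeriv 3 g t| ≤ kappa * (1 + t ^ (alpha - 3))) :
    ∃ C : ℝ, 0 < C ∧ ∀ N : ℕ, 1 ≤ N → ∀ i : ℕ, 1 ≤ i → i ≤ N - 1 →
      ∀ t : ℕ → ℝ, (∀ j, t j = T * (((j : ℝ) / (N : ℝ)) ^ theta)) →
        (t i + sigma * (t (i + 1) - t i)) ^ alpha
            * (t (i + 1) - t i) ^ (3 - alpha)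
            * (⨆ s ∈ Set.Ioo (t i) (t (i + 1)), |iteratedDeriv 3 g s|)
          ≤ C * (N : ℝ) ^ (-(min (3 - alpha) (theta * alpha))) := by
  obtain ⟨hα0, hα1⟩ := halpha
  obtain ⟨hσ0, hσ1⟩ := hsigma
  have hp : 0 ≤ 3 - alpha := by linarith
  set K := kappa * (T ^ (3 - alpha) + 1)
  refine ⟨K * (T ^ alpha * (2 ^ theta * theta) ^ (3 - alpha)) + 1, by positivity,
    fun N hN i hi hiN t ht => ?_⟩
  obtain rfl : t = gradedMesh T theta N := funext ht
  set u := gradedMesh T theta N i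
  set v := gradedMesh T theta N (i + 1)
  have hu : 0 < u := gradedMesh_pos hT hN hi
  have huv : u ≤ v := gradedMesh_monotone hT.le (by linarith) i.le_succ
  have hsup : ⨆ s ∈ Ioo u v, |iteratedDeriv 3 g s| ≤ K / u ^ (3 - alpha) := by
    rw [mul_div_assoc]
    refine iSup_Ioo_abs_le_div_rpow hkappa hp hu huv (gradedMesh_le hT.le (by linarith) (by omega))
      fun s hs => ?_
    simpa only [neg_sub] using hg s hs
  have hmid : u + sigma * (v - u) ≤ v := by nlinarith
  calc (u + sigma * (v - u)) ^ alpha * (v - u) ^ (3 - alpha)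
        * ⨆ s ∈ Ioo u v, |iteratedDeriv 3 g s|
      ≤ v ^ alpha * (v - u) ^ (3 - alpha) * (K / u ^ (3 - alpha)) := by
        gcongr
        · exact Real.iSup_nonneg fun _ => Real.iSup_nonneg fun _ => abs_nonneg _
        · exact mul_nonneg (rpow_nonneg (hu.le.trans huv) _) (rpow_nonneg (sub_nonneg.2 huv) _)
    _ = K * (v ^ alpha * ((v - u) / u) ^ (3 - alpha)) := by
        rw [div_rpow (by linarith) hu.le]; ring
    _ ≤ K * (T ^ alpha * (2 ^ theta * theta) ^ (3 - alpha)
          * (N : ℝ) ^ (-min (3 - alpha) (theta * alpha))) :=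
        mul_le_mul_of_nonneg_left
          (gradedMesh_rpow_mul_step_ratio_le hT htheta hi (by omega) alpha hp) (by positivity)
    _ ≤ _ := by
        rw [← mul_assoc]; gcongr; linarith
end
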